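/- arXiv:1101.2274 — 5 statements merged into one kernel-verified Lean document; each statement's English description precedes it below -/
import Mathlib

section
/- Let Ω₁ and Ω₂ be n×n real symmetric matrices such that dim(ker Ω₁ ∩ ker Ω₂) = k and rank(Ω₁) + rank(Ω₂) = n − k. Then for every real t with t ≠ 0 and t ≠ 1, rank(t·Ω₁ + (1−t)·Ω₂) = n − k. -/
open Matrix

theorem combining_symmetric_matrices_rank
    (n k : ℕ) (Ω₁ Ω₂ : Matrix (Fin n) (Fin n) ℝ)
    (hsym₁ : Ω₁.IsSymm) (hsym₂ : Ω₂.IsSymm)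
    (hker : Module.finrank ℝ
      ↥(LinearMap.ker Ω₁.mulVecLin ⊓ LinearMap.ker Ω₂.mulVecLin) = k)
    (hrank : Ω₁.rank + Ω₂.rank = n - k) :
    ∀ t : ℝ, t ≠ 0 → t ≠ 1 → (t • Ω₁ + (1 - t) • Ω₂).rank = n - k := by
  intro t ht0 ht1
  have ht1' : (1 : ℝ) - t ≠ 0 := sub_ne_zero.mpr (Ne.symm ht1)
  set V₁ := LinearMap.ker Ω₁.mulVecLin with hV₁
  set V₂ := LinearMap.ker Ω₂.mulVecLin with hV₂
  have htop : Module.finrank ℝ (Fin n → ℝ) = n := by simp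
  -- rank-nullity for Ω₁ and Ω₂
  have h₁ : Ω₁.rank + Module.finrank ℝ V₁ = n := by
    have := LinearMap.finrank_range_add_finrank_ker Ω₁.mulVecLin
    rwa [htop] at this
  have h₂ : Ω₂.rank + Module.finrank ℝ V₂ = n := by
    have := LinearMap.finrank_range_add_finrank_ker Ω₂.mulVecLin
    rwa [htop] at this
  have hkn : k ≤ n := by
    rw [← hker]
    exact (Submodule.finrank_le _).trans_eq htop
  -- dimension of the sup
  have hsup : Module.finrank ℝ ↥(V₁ ⊔ V₂) + k
      = Module.finrank ℝ V₁ + Module.finrank ℝ V₂ := by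
    rw [← hker]
    exact Submodule.finrank_sup_add_finrank_inf_eq V₁ V₂
  have hsupn : Module.finrank ℝ ↥(V₁ ⊔ V₂) = n := by omega
  have hsuptop : V₁ ⊔ V₂ = ⊤ := by
    apply Submodule.eq_top_of_finrank_eq
    rw [hsupn, htop]
  -- ranges intersect trivially
  have hranges : ∀ y : Fin n → ℝ, y ∈ LinearMap.range Ω₁.mulVecLin →
      y ∈ LinearMap.range Ω₂.mulVecLin → y = 0 := by
    intro y hy₁ hy₂
    obtain ⟨a, ha⟩ := hy₁
    obtain ⟨b, hb⟩ := hy₂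
    have key : ∀ x ∈ V₁ ⊔ V₂, dotProduct y x = 0 := by
      intro x hx
      obtain ⟨u, hu, v, hv, rfl⟩ := Submodule.mem_sup.mp hx
      have hu' : Ω₁ *ᵥ u = 0 := hu
      have hv' : Ω₂ *ᵥ v = 0 := hv
      have e₁ : dotProduct y u = 0 := by
        rw [← ha]
        have : dotProduct (Ω₁.mulVecLin a) u
            = dotProduct a (Ω₁ *ᵥ u) := by
          rw [Matrix.mulVecLin_apply, dotProduct_comm, Matrix.dotProduct_mulVec,
            ← Matrix.mulVec_transpose, hsym₁.eq, dotProduct_comm]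
        rw [this, hu', dotProduct_zero]
      have e₂ : dotProduct y v = 0 := by
        rw [← hb]
        have : dotProduct (Ω₂.mulVecLin b) v
            = dotProduct b (Ω₂ *ᵥ v) := by
          rw [Matrix.mulVecLin_apply, dotProduct_comm, Matrix.dotProduct_mulVec,
            ← Matrix.mulVec_transpose, hsym₂.eq, dotProduct_comm]
        rw [this, hv', dotProduct_zero]
      rw [dotProduct_add, e₁, e₂, add_zero]
    have hyy : dotProduct y y = 0 := key y (hsuptop ▸ Submodule.mem_top)
    exact dotProduct_self_eq_zero.mp hyy
  -- kernel of the combination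
  set M := t • Ω₁ + (1 - t) • Ω₂ with hM
  have hkerM : LinearMap.ker M.mulVecLin = V₁ ⊓ V₂ := by
    apply le_antisymm
    · intro x hx
      have hx' : t • (Ω₁ *ᵥ x) + (1 - t) • (Ω₂ *ᵥ x) = 0 := by
        have : M *ᵥ x = 0 := hx
        rwa [hM, Matrix.add_mulVec, Matrix.smul_mulVec,
          Matrix.smul_mulVec] at this
      have heq : t • (Ω₁ *ᵥ x) = -((1 - t) • (Ω₂ *ᵥ x)) := by
        rw [eq_neg_iff_add_eq_zero]; exact hx'
      have hmem₁ : t • (Ω₁ *ᵥ x) ∈ LinearMap.range Ω₁.mulVecLin :=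
        Submodule.smul_mem _ _ (LinearMap.mem_range_self _ x)
      have hmem₂ : t • (Ω₁ *ᵥ x) ∈ LinearMap.range Ω₂.mulVecLin := by
        rw [heq]
        exact Submodule.neg_mem _ (Submodule.smul_mem _ _ (LinearMap.mem_range_self _ x))
      have hzero := hranges _ hmem₁ hmem₂
      have hΩ₁ : Ω₁ *ᵥ x = 0 := by
        have := smul_eq_zero.mp hzero
        tauto
      have hΩ₂ : Ω₂ *ᵥ x = 0 := by
        have : (1 - t) • (Ω₂ *ᵥ x) = 0 := by
          rw [← neg_eq_zero, ← heq, hzero]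
        have := smul_eq_zero.mp this
        tauto
      exact ⟨hΩ₁, hΩ₂⟩
    · intro x hx
      obtain ⟨hx₁, hx₂⟩ := hx
      have hx₁' : Ω₁ *ᵥ x = 0 := hx₁
      have hx₂' : Ω₂ *ᵥ x = 0 := hx₂
      show M *ᵥ x = 0
      rw [hM, Matrix.add_mulVec, Matrix.smul_mulVec, Matrix.smul_mulVec,
        hx₁', hx₂', smul_zero, smul_zero, add_zero]
  -- rank-nullity for M
  have hM' : M.rank + Module.finrank ℝ (LinearMap.ker M.mulVecLin) = n := by
    have := LinearMap.finrank_range_add_finrank_ker M.mulVecLin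
    rwa [htop] at this
  rw [hkerM, hker] at hM'
  omega
end

section
/- Let Ω₁ and Ω₂ be n×n real symmetric matrices with rank(Ω₁) + rank(Ω₂) = n and ker Ω₁ ∩ ker Ω₂ = {0}. Then for all t ∉ {0, 1}, the matrix t·Ω₁ + (1−t)·Ω₂ is nonsingular. -/
/-!
By symmetry, `[Ω₁ Ω₂]` is the transpose of the stacked matrix `[Ω₁; Ω₂]`, whose kernel is
`ker Ω₁ ∩ ker Ω₂ = 0`; so both have rank `n` and `Im Ω₁ + Im Ω₂ = ℝⁿ`. Since the ranks add up to
`n`, this sum is direct. If `(t Ω₁ + (1 - t) Ω₂) v = 0`, then `t Ω₁ v = -(1 - t) Ω₂ v` lies in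
`Im Ω₁ ∩ Im Ω₂ = 0`, so for `t ≠ 0, 1` the vector `v` lies in `ker Ω₁ ∩ ker Ω₂ = 0`.
-/

namespace Submodule

open Module

variable {K V : Type*} [DivisionRing K] [AddCommGroup V] [Module K V] [FiniteDimensional K V]

theorem disjoint_of_sup_eq_top_of_finrank_add_eq {s t : Submodule K V} (hsup : s ⊔ t = ⊤)
    (hdim : finrank K s + finrank K t = finrank K V) : Disjoint s t := by
  have h := finrank_sup_add_finrank_inf_eq s t
  rw [hsup, finrank_top, hdim, Nat.add_eq_left, finrank_eq_zero] at h
  exact disjoint_iff.mpr h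

end Submodule

namespace Matrix

open LinearMap

section CommSemiring

variable {R m m₁ m₂ n n₁ n₂ : Type*} [CommSemiring R]

theorem ker_mulVecLin_fromRows [Fintype n] (A₁ : Matrix m₁ n R) (A₂ : Matrix m₂ n R) :
    ker (fromRows A₁ A₂).mulVecLin = ker A₁.mulVecLin ⊓ ker A₂.mulVecLin := by
  ext v
  simp [← Sum.elim_zero_zero, Sum.elim_eq_iff]

theorem range_mulVecLin_fromCols [Fintype n₁] [Fintype n₂] (A₁ : Matrix m n₁ R)
    (A₂ : Matrix m n₂ R) :
    range (fromCols A₁ A₂).mulVecLin = range A₁.mulVecLin ⊔ range A₂.mulVecLin := by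
  rw [range_mulVecLin, range_mulVecLin, range_mulVecLin, ← Submodule.span_union,
    ← Set.Sum.elim_range]
  congr 2
  ext (j | j) <;> rfl

end CommSemiring

variable {K m₁ m₂ n : Type*} [Field K] [Fintype n]

theorem sup_range_mulVecLin_transpose_eq_top [Fintype m₁] [Fintype m₂] (A₁ : Matrix m₁ n K)
    (A₂ : Matrix m₂ n K) (hker : ker A₁.mulVecLin ⊓ ker A₂.mulVecLin = ⊥) :
    range A₁ᵀ.mulVecLin ⊔ range A₂ᵀ.mulVecLin = ⊤ := by
  rw [← range_mulVecLin_fromCols, ← transpose_fromRows]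
  apply Submodule.eq_top_of_finrank_eq
  change (fromRows A₁ A₂)ᵀ.rank = _
  rw [rank_transpose, rank, finrank_range_of_inj]
  rw [← ker_eq_bot, ker_mulVecLin_fromRows, hker]

theorem det_smul_add_smul_ne_zero [DecidableEq n] {A B : Matrix n n K}
    (hrange : Disjoint (range A.mulVecLin) (range B.mulVecLin))
    (hker : ker A.mulVecLin ⊓ ker B.mulVecLin = ⊥) {a b : K} (ha : a ≠ 0) (hb : b ≠ 0) :
    (a • A + b • B).det ≠ 0 := by
  rw [Ne, ← exists_mulVec_eq_zero_iff]
  rintro ⟨v, hv0, hv⟩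
  rw [add_mulVec, smul_mulVec, smul_mulVec] at hv
  obtain ⟨hA, hB⟩ := Submodule.disjoint_iff_add_eq_zero.mp hrange
    (Submodule.smul_mem _ a ⟨v, rfl⟩) (Submodule.smul_mem _ b ⟨v, rfl⟩) hv
  have hv_ker : v ∈ ker A.mulVecLin ⊓ ker B.mulVecLin :=
    ⟨(smul_eq_zero.mp hA).resolve_left ha, (smul_eq_zero.mp hB).resolve_left hb⟩
  rw [hker, Submodule.mem_bot] at hv_ker
  exact hv0 hv_ker

end Matrix

open Matrix in

theorem combining_symmetric_matrices_nonsingular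
    (n : ℕ) (Ω₁ Ω₂ : Matrix (Fin n) (Fin n) ℝ)
    (hsym₁ : Ω₁.IsSymm) (hsym₂ : Ω₂.IsSymm)
    (hrank : Ω₁.rank + Ω₂.rank = n)
    (hker : LinearMap.ker Ω₁.mulVecLin ⊓ LinearMap.ker Ω₂.mulVecLin = ⊥) :
    ∀ t : ℝ, t ≠ 0 → t ≠ 1 → (t • Ω₁ + (1 - t) • Ω₂).det ≠ 0 := by
  intro t ht0 ht1
  have hsup := sup_range_mulVecLin_transpose_eq_top Ω₁ Ω₂ hker
  rw [hsym₁.eq, hsym₂.eq] at hsup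
  have hdisj := Submodule.disjoint_of_sup_eq_top_of_finrank_add_eq hsup
    (by rwa [Module.finrank_fin_fun])
  exact det_smul_add_smul_ne_zero hdisj hker ht0 (sub_ne_zero.mpr ht1.symm)
end

section
/- Let ω be an equilibrium stress for a configuration p in ℝᵈ with n points whose affine span is ℝᵈ, and suppose the associated stress matrix Ω has rank n − d − 1. If q is any configuration of n points in ℝᵈ for which ω is also an equilibrium stress, then q is an affine image of p: there exist a d×d matrix A and a vector v with qᵢ = A pᵢ + v for all i. -/
/-!
Both `1` and the coordinate columns `i ↦ p i k` of an equilibrium configuration lie in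
`ker Ω`, and the map `(c, a) ↦ (i ↦ c + a ⬝ᵥ p i)` is injective because `p` affinely spans
`ℝᵈ`. Its range is therefore a `(d + 1)`-dimensional subspace of `ker Ω`, which has dimension
`n - rank Ω = d + 1`, so the two coincide. Each coordinate column of `q` lies in `ker Ω`,
hence equals `i ↦ c + a ⬝ᵥ p i` for some `c` and `a`: these are the rows of `A` and the
entries of `v`.
-/

/-- The stress matrix of a stress `ω`: off-diagonal entries `-ω i j`, diagonal
entries chosen so that all row sums are zero. -/
def stressMatrix {n : ℕ} (ω : Fin n → Fin n → ℝ) : Matrix (Fin n) (Fin n) ℝ :=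
  fun i j => if i = j then ∑ k, ω i k else -(ω i j)

open Matrix

section Stress

variable {n : ℕ} {ω : Fin n → Fin n → ℝ}

theorem stressMatrix_mulVec_apply (hdiag : ∀ i, ω i i = 0) (x : Fin n → ℝ) (j : Fin n) :
    (stressMatrix ω *ᵥ x) j = ∑ i, ω j i * (x j - x i) := by
  have hentry : ∀ i, stressMatrix ω j i * x i =
      (if j = i then (∑ k, ω j k) * x j else 0) - ω j i * x i := by
    intro i
    by_cases h : j = i
    · subst h; simp [stressMatrix, hdiag]
    · simp [stressMatrix, h]
  simp only [mulVec, dotProduct, hentry, Finset.sum_sub_distrib, Finset.sum_ite_eq,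
    Finset.mem_univ, if_true, mul_sub, Finset.sum_mul]

theorem stressMatrix_mulVec_eq_zero (hsymm : ∀ i j, ω i j = ω j i) (hdiag : ∀ i, ω i i = 0)
    {x : Fin n → ℝ} (hx : ∀ j, ∑ i, ω i j * (x i - x j) = 0) : stressMatrix ω *ᵥ x = 0 := by
  ext j
  rw [stressMatrix_mulVec_apply hdiag, Pi.zero_apply, ← neg_eq_zero, ← hx j,
    ← Finset.sum_neg_distrib]
  exact Finset.sum_congr rfl fun i _ => by rw [hsymm]; ring

end Stress

section AffineEval

variable {ι κ : Type*} [Fintype κ]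

def affineEval (p : ι → κ → ℝ) : (ℝ × (κ → ℝ)) →ₗ[ℝ] (ι → ℝ) where
  toFun ca i := ca.1 + ca.2 ⬝ᵥ p i
  map_add' x y := by
    ext i
    simp only [Prod.fst_add, Prod.snd_add, add_dotProduct, Pi.add_apply]
    ring
  map_smul' c x := by
    ext i
    simp only [Prod.smul_fst, Prod.smul_snd, smul_dotProduct, smul_eq_mul, RingHom.id_apply,
      Pi.smul_apply]
    ring

@[simp]
theorem affineEval_apply (p : ι → κ → ℝ) (ca : ℝ × (κ → ℝ)) (i : ι) :
    affineEval p ca i = ca.1 + ca.2 ⬝ᵥ p i := rfl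

theorem affineEval_injective {p : ι → κ → ℝ} (hspan : affineSpan ℝ (Set.range p) = ⊤) :
    Function.Injective (affineEval p) := by
  classical
  rw [← LinearMap.ker_eq_bot, Submodule.eq_bot_iff]
  rintro ⟨c, a⟩ h
  let f : (κ → ℝ) →ᵃ[ℝ] ℝ := (dotProductBilin ℝ ℝ a).toAffineMap + AffineMap.const ℝ _ c
  have hf : f = AffineMap.const ℝ _ 0 := AffineMap.ext_on hspan <| by
    rintro - ⟨i, rfl⟩
    simpa [f, add_comm] using congrFun (LinearMap.mem_ker.mp h) i
  have hc : c = 0 := by simpa [f] using congrArg (· 0) hf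
  have ha : a = 0 := funext fun l => by simpa [f, hc] using congrArg (· (Pi.single l 1)) hf
  simp [hc, ha]

theorem finrank_range_affineEval [Finite ι] {p : ι → κ → ℝ}
    (hspan : affineSpan ℝ (Set.range p) = ⊤) :
    Module.finrank ℝ (LinearMap.range (affineEval p)) = Fintype.card κ + 1 := by
  rw [LinearMap.finrank_range_of_inj (affineEval_injective hspan), Module.finrank_prod,
    Module.finrank_self, Module.finrank_fintype_fun_eq_card, add_comm]

end AffineEval

theorem range_affineEval_le_ker_stressMatrix {n d : ℕ} {ω : Fin n → Fin n → ℝ}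
    (hsymm : ∀ i j, ω i j = ω j i) (hdiag : ∀ i, ω i i = 0) {p : Fin n → Fin d → ℝ}
    (hequil : ∀ j, ∑ i, ω i j • (p i - p j) = 0) :
    LinearMap.range (affineEval p) ≤ LinearMap.ker (stressMatrix ω).mulVecLin := by
  rintro - ⟨⟨c, a⟩, rfl⟩
  refine stressMatrix_mulVec_eq_zero hsymm hdiag fun j => ?_
  calc ∑ i, ω i j * (affineEval p (c, a) i - affineEval p (c, a) j)
      = a ⬝ᵥ ∑ i, ω i j • (p i - p j) := by
        simp only [affineEval_apply, dotProduct_sum, dotProduct_smul, dotProduct_sub,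
          smul_eq_mul, add_sub_add_left_eq_sub]
    _ = 0 := by rw [hequil, dotProduct_zero]

theorem ker_stressMatrix_eq_range_affineEval {n d : ℕ} {ω : Fin n → Fin n → ℝ}
    (hsymm : ∀ i j, ω i j = ω j i) (hdiag : ∀ i, ω i i = 0) {p : Fin n → Fin d → ℝ}
    (hequil : ∀ j, ∑ i, ω i j • (p i - p j) = 0) (hspan : affineSpan ℝ (Set.range p) = ⊤)
    (hrank : (stressMatrix ω).rank = n - d - 1) :
    LinearMap.ker (stressMatrix ω).mulVecLin = LinearMap.range (affineEval p) := by
  have hrange : Module.finrank ℝ (LinearMap.range (affineEval p)) = d + 1 := by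
    simpa using finrank_range_affineEval hspan
  have hle : d + 1 ≤ n := by
    simpa [hrange] using (LinearMap.range (affineEval p)).finrank_le
  have hker : (stressMatrix ω).rank +
      Module.finrank ℝ (LinearMap.ker (stressMatrix ω).mulVecLin) = n := by
    simpa [Matrix.rank] using LinearMap.finrank_range_add_finrank_ker (stressMatrix ω).mulVecLin
  refine (Submodule.eq_of_le_of_finrank_eq
    (range_affineEval_le_ker_stressMatrix hsymm hdiag hequil) ?_).symm
  omega

theorem maximal_rank_implies_universal
    (n d : ℕ) (p : Fin n → Fin d → ℝ) (ω : Fin n → Fin n → ℝ)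
    (hsymm : ∀ i j, ω i j = ω j i) (hdiag : ∀ i, ω i i = 0)
    (hequil : ∀ j, ∑ i, ω i j • (p i - p j) = 0)
    (hspan : affineSpan ℝ (Set.range p) = ⊤)
    (hrank : (stressMatrix ω).rank = n - d - 1)
    (q : Fin n → Fin d → ℝ)
    (hequilq : ∀ j, ∑ i, ω i j • (q i - q j) = 0) :
    ∃ (A : Matrix (Fin d) (Fin d) ℝ) (v : Fin d → ℝ),
      ∀ i, q i = A.mulVec (p i) + v := by
  have hcoord : ∀ k, (fun i => q i k) ∈ LinearMap.range (affineEval p) := fun k => by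
    rw [← ker_stressMatrix_eq_range_affineEval hsymm hdiag hequil hspan hrank]
    refine stressMatrix_mulVec_eq_zero hsymm hdiag fun j => ?_
    simpa [Finset.sum_apply] using congrFun (hequilq j) k
  choose ca hca using hcoord
  refine ⟨Matrix.of fun k => (ca k).2, fun k => (ca k).1, fun i => funext fun k => ?_⟩
  rw [← congrFun (hca k) i]
  simp [mulVec, add_comm]
end

section
/- Let Ω₁ be an n₁×n₁ stress matrix of maximal rank n₁ − (d+1) for a configuration p in ℝᵈ, and Ω₂ an n₂×n₂ stress matrix of maximal rank n₂ − (d+1) for a configuration q in ℝᵈ, where p and q share exactly d+1 points which are affinely independent. Extend each Ωᵢ by zeros to an n×n matrix Ω̃ᵢ on the n = n₁ + n₂ − (d+1) combined vertices. Then dim(ker Ω̃₁ ∩ ker Ω̃₂) = d + 1. -/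
/-- Extension by zeros of a matrix indexed by a subset `V₁` of the vertices to a
matrix indexed by all vertices. -/
def extendMatrix {V : Type*} (V₁ : Set V) [DecidablePred (· ∈ V₁)]
    (Ω : Matrix ↥V₁ ↥V₁ ℝ) : Matrix V V ℝ :=
  fun u v => if h : u ∈ V₁ ∧ v ∈ V₁ then Ω ⟨u, h.1⟩ ⟨v, h.2⟩ else 0

/-- The linear map sending `(c, a)` to the affine function `w ↦ c + ∑ k, a k * p w k`. -/
noncomputable def affMap {d : ℕ} {W : Type*} [Fintype W] (p : W → Fin d → ℝ) :
    (ℝ × (Fin d → ℝ)) →ₗ[ℝ] (W → ℝ) where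
  toFun ca := fun w => ca.1 + ∑ k, ca.2 k * p w k
  map_add' x y := by
    funext w
    simp [add_mul, Finset.sum_add_distrib]
    ring
  map_smul' c x := by
    funext w
    simp [Finset.mul_sum, mul_add, mul_assoc]

lemma affMap_injective {d : ℕ} {W : Type*} [Fintype W]
    (p : W → Fin d → ℝ) (hcard : Fintype.card W = d + 1)
    (hindep : AffineIndependent ℝ p) : Function.Injective (affMap p) := by
  have hne : Nonempty W := by
    rw [← Fintype.card_pos_iff, hcard]; omega
  obtain ⟨w₀⟩ := hne
  rw [← LinearMap.ker_eq_bot, LinearMap.ker_eq_bot']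
  rintro ⟨c, a⟩ h0
  have h0' : ∀ w, c + ∑ k, a k * p w k = 0 := fun w => congrFun h0 w
  -- the affine span is everything, hence the vector span is everything
  have htop : affineSpan ℝ (Set.range p) = ⊤ := by
    rw [hindep.affineSpan_eq_top_iff_card_eq_finrank_add_one, hcard,
      Module.finrank_fin_fun]
  have hvtop : vectorSpan ℝ (Set.range p) = ⊤ :=
    AffineSubspace.vectorSpan_eq_top_of_affineSpan_eq_top ℝ (Fin d → ℝ) (Fin d → ℝ) htop
  -- the linear functional `x ↦ ∑ k, a k * x k` kills all differences `p w - p w₀`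
  set L : (Fin d → ℝ) →ₗ[ℝ] ℝ := ∑ k, a k • LinearMap.proj k with hL
  have hLapp : ∀ x, L x = ∑ k, a k * x k := by
    intro x
    simp [hL, LinearMap.sum_apply]
  have hLzero : L = 0 := by
    have hsub : vectorSpan ℝ (Set.range p) ≤ LinearMap.ker L := by
      rw [vectorSpan_range_eq_span_range_vsub_right ℝ p w₀, Submodule.span_le]
      rintro x ⟨w, rfl⟩
      have := h0' w
      have h₀ := h0' w₀
      simp only [SetLike.mem_coe, LinearMap.mem_ker]
      rw [hLapp]
      simp only [vsub_eq_sub, Pi.sub_apply, mul_sub, Finset.sum_sub_distrib]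
      linarith
    rw [hvtop] at hsub
    exact LinearMap.ker_eq_top.mp (top_le_iff.mp hsub)
  have ha : a = 0 := by
    funext k
    have h2 : L (Pi.single k 1) = a k := by
      rw [hLapp]
      simp [Pi.single_apply, Finset.sum_ite_eq']
    rw [hLzero] at h2
    simpa using h2.symm
  have hc : c = 0 := by
    have := h0' w₀
    rw [show a = 0 from ha] at this
    simpa using this
  simp [Prod.ext_iff, hc, ha]

lemma affMap_apply {d : ℕ} {W : Type*} [Fintype W] (p : W → Fin d → ℝ)
    (ca : ℝ × (Fin d → ℝ)) (w : W) :
    affMap p ca w = ca.1 + ∑ k, ca.2 k * p w k := rfl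

/-- If the stress conditions hold and the rank is maximal, the kernel is exactly the
space of affine functions of the configuration. -/
lemma ker_eq_range_affMap {d : ℕ} {W : Type*} [Fintype W] [DecidableEq W]
    (Ω : Matrix W W ℝ) (p : W → Fin d → ℝ)
    (hone : Ω.mulVec (fun _ => 1) = 0) (hp : ∀ k, Ω.mulVec (fun w => p w k) = 0)
    (hr : Ω.rank = Fintype.card W - (d + 1)) (hcard : d + 1 ≤ Fintype.card W)
    (hinj : Function.Injective (affMap p)) :
    LinearMap.ker Ω.mulVecLin = LinearMap.range (affMap p) := by
  have hle : LinearMap.range (affMap p) ≤ LinearMap.ker Ω.mulVecLin := by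
    rintro _ ⟨⟨c, a⟩, rfl⟩
    have : affMap p (c, a) = c • (fun _ => (1:ℝ)) + ∑ k, a k • (fun w => p w k) := by
      funext w
      simp [affMap_apply, Finset.sum_apply]
    rw [LinearMap.mem_ker, this]
    simp only [map_add, map_smul, map_sum]
    rw [show Ω.mulVecLin (fun _ => (1:ℝ)) = 0 from hone]
    have : ∀ k, Ω.mulVecLin (fun w => p w k) = 0 := hp
    simp [this]
  have hkerfin : Module.finrank ℝ (LinearMap.ker Ω.mulVecLin) = d + 1 := by
    have h1 := LinearMap.finrank_range_add_finrank_ker Ω.mulVecLin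
    rw [Module.finrank_pi] at h1
    have h2 : Ω.rank = Module.finrank ℝ (LinearMap.range Ω.mulVecLin) := rfl
    omega
  have hrangefin : Module.finrank ℝ (LinearMap.range (affMap p)) = d + 1 := by
    rw [LinearMap.finrank_range_of_inj hinj, Module.finrank_prod, Module.finrank_self,
      Module.finrank_fin_fun]
    omega
  exact (Submodule.eq_of_le_of_finrank_le hle (by rw [hkerfin, hrangefin])).symm

lemma ker_extend {V : Type*} [Fintype V] (S : Set V) [DecidablePred (· ∈ S)]
    (Ω : Matrix ↥S ↥S ℝ) :
    LinearMap.ker (extendMatrix S Ω).mulVecLin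
      = (LinearMap.ker Ω.mulVecLin).comap
          (LinearMap.funLeft ℝ ℝ (Subtype.val : ↥S → V)) := by
  ext x
  have hsum : ∀ u : ↥S, (extendMatrix S Ω).mulVec x u.val
      = Ω.mulVec (LinearMap.funLeft ℝ ℝ (Subtype.val : ↥S → V) x) u := by
    intro u
    unfold extendMatrix Matrix.mulVec dotProduct
    simp only [u.2, true_and, LinearMap.funLeft_apply]
    rw [← Finset.sum_filter_of_ne (p := (· ∈ S))
      (f := fun v => (if h : v ∈ S then Ω u ⟨v, h⟩ else 0) * x v)
      (by intro v _ hv; by_contra hvS; simp [hvS] at hv),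
      Finset.sum_subtype (p := (· ∈ S)) (Finset.univ.filter (· ∈ S))
        (fun v => by simp) (fun v => (if h : v ∈ S then Ω u ⟨v, h⟩ else 0) * x v)]
    apply Finset.sum_congr rfl
    intro v _
    simp [v.2]
  constructor
  · intro hx
    simp only [LinearMap.mem_ker, Matrix.mulVecLin_apply] at hx ⊢
    rw [Submodule.mem_comap]
    simp only [LinearMap.mem_ker, Matrix.mulVecLin_apply]
    funext u
    rw [← hsum u, hx]
    simp
  · intro hx
    rw [Submodule.mem_comap] at hx
    simp only [LinearMap.mem_ker, Matrix.mulVecLin_apply] at hx ⊢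
    funext u
    by_cases hu : u ∈ S
    · have := congrFun hx ⟨u, hu⟩
      rw [← hsum ⟨u, hu⟩] at this
      simpa using this
    · show (extendMatrix S Ω).mulVec x u = (0 : V → ℝ) u
      unfold extendMatrix Matrix.mulVec dotProduct
      simp [hu]

theorem kernel_intersection_of_extended_stress_matrices
    (d : ℕ) {V : Type*} [Fintype V] [DecidableEq V]
    (V₁ V₂ : Set V) [DecidablePred (· ∈ V₁)] [DecidablePred (· ∈ V₂)]
    (hunion : V₁ ∪ V₂ = Set.univ) (hcard : Nat.card ↥(V₁ ∩ V₂) = d + 1)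
    (p : V → Fin d → ℝ)
    (hindep : AffineIndependent ℝ (fun v : ↥(V₁ ∩ V₂) => p v))
    (Ω₁ : Matrix ↥V₁ ↥V₁ ℝ) (Ω₂ : Matrix ↥V₂ ↥V₂ ℝ)
    (hsym₁ : Ω₁.IsSymm) (hsym₂ : Ω₂.IsSymm)
    (hone₁ : Ω₁.mulVec (fun _ => 1) = 0) (hone₂ : Ω₂.mulVec (fun _ => 1) = 0)
    (hp₁ : ∀ k, Ω₁.mulVec (fun v : ↥V₁ => p v k) = 0)
    (hp₂ : ∀ k, Ω₂.mulVec (fun v : ↥V₂ => p v k) = 0)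
    (hr₁ : Ω₁.rank = Fintype.card ↥V₁ - (d + 1))
    (hr₂ : Ω₂.rank = Fintype.card ↥V₂ - (d + 1)) :
    Module.finrank ℝ
      ↥(LinearMap.ker (extendMatrix V₁ Ω₁).mulVecLin ⊓
        LinearMap.ker (extendMatrix V₂ Ω₂).mulVecLin) = d + 1 := by
  classical
  -- shorthand
  have hcard' : Fintype.card ↥(V₁ ∩ V₂) = d + 1 := by
    rw [← Nat.card_eq_fintype_card]; exact hcard
  -- inclusions from the intersection
  set ι₁ : ↥(V₁ ∩ V₂) → ↥V₁ := Set.inclusion Set.inter_subset_left with hι₁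
  set ι₂ : ↥(V₁ ∩ V₂) → ↥V₂ := Set.inclusion Set.inter_subset_right with hι₂
  have hι₁inj : Function.Injective ι₁ := Set.inclusion_injective Set.inter_subset_left
  have hι₂inj : Function.Injective ι₂ := Set.inclusion_injective Set.inter_subset_right
  -- cardinality bounds
  have hcard₁ : d + 1 ≤ Fintype.card ↥V₁ := hcard' ▸ Fintype.card_le_of_injective ι₁ hι₁inj
  have hcard₂ : d + 1 ≤ Fintype.card ↥V₂ := hcard' ▸ Fintype.card_le_of_injective ι₂ hι₂inj
  -- injectivity of the intersection affine map
  have hinjI : Function.Injective (affMap (fun w : ↥(V₁ ∩ V₂) => p w)) :=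
    affMap_injective _ hcard' hindep
  -- restrictions compose
  have hcomp₁ : ∀ ca, (fun w : ↥(V₁ ∩ V₂) => affMap (fun v : ↥V₁ => p v) ca (ι₁ w))
      = affMap (fun w : ↥(V₁ ∩ V₂) => p w) ca := fun ca => rfl
  have hcomp₂ : ∀ ca, (fun w : ↥(V₁ ∩ V₂) => affMap (fun v : ↥V₂ => p v) ca (ι₂ w))
      = affMap (fun w : ↥(V₁ ∩ V₂) => p w) ca := fun ca => rfl
  -- injectivity of restricted affine maps
  have hinj₁ : Function.Injective (affMap (fun v : ↥V₁ => p v)) := by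
    intro a b hab
    apply hinjI
    rw [← hcomp₁ a, ← hcomp₁ b, hab]
  have hinj₂ : Function.Injective (affMap (fun v : ↥V₂ => p v)) := by
    intro a b hab
    apply hinjI
    rw [← hcomp₂ a, ← hcomp₂ b, hab]
  -- kernels of the original matrices
  have hker₁ := ker_eq_range_affMap Ω₁ (fun v : ↥V₁ => p v) hone₁ hp₁ hr₁ hcard₁ hinj₁
  have hker₂ := ker_eq_range_affMap Ω₂ (fun v : ↥V₂ => p v) hone₂ hp₂ hr₂ hcard₂ hinj₂
  -- global affine map injectivity
  have hinjV : Function.Injective (affMap p) := by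
    intro a b hab
    apply hinjI
    funext w
    exact congrFun hab w.val
  -- main claim: the intersection of kernels equals the range of the global affine map
  have hmain : LinearMap.ker (extendMatrix V₁ Ω₁).mulVecLin ⊓
      LinearMap.ker (extendMatrix V₂ Ω₂).mulVecLin = LinearMap.range (affMap p) := by
    rw [ker_extend V₁ Ω₁, ker_extend V₂ Ω₂, hker₁, hker₂]
    ext x
    simp only [Submodule.mem_inf, Submodule.mem_comap, LinearMap.mem_range]
    constructor
    · rintro ⟨⟨ca, hca⟩, ⟨cb, hcb⟩⟩
      have hca' : ∀ v : ↥V₁, affMap (fun v : ↥V₁ => p v) ca v = x v.val := fun v =>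
        congrFun hca v
      have hcb' : ∀ v : ↥V₂, affMap (fun v : ↥V₂ => p v) cb v = x v.val := fun v =>
        congrFun hcb v
      have heq : ca = cb := by
        apply hinjI
        funext w
        rw [← hcomp₁ ca, ← hcomp₂ cb]
        show affMap (fun v : ↥V₁ => p v) ca (ι₁ w) = affMap (fun v : ↥V₂ => p v) cb (ι₂ w)
        rw [hca' (ι₁ w), hcb' (ι₂ w)]
      refine ⟨ca, ?_⟩
      funext v
      have hv : v ∈ V₁ ∪ V₂ := hunion ▸ Set.mem_univ v
      rcases hv with hv | hv
      · exact hca' ⟨v, hv⟩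
      · rw [heq]; exact hcb' ⟨v, hv⟩
    · rintro ⟨ca, rfl⟩
      exact ⟨⟨ca, rfl⟩, ⟨ca, rfl⟩⟩
  rw [hmain, LinearMap.finrank_range_of_inj hinjV, Module.finrank_prod,
    Module.finrank_self, Module.finrank_fin_fun]
  omega
end

section
/- With the setup of the previous statement (extended stress matrices Ω̃₁, Ω̃₂ of an overlap of exactly d+1 affinely independent vertices, each original matrix of maximal rank), for every t with t ≠ 0 and t ≠ 1 the matrix t·Ω̃₁ + (1−t)·Ω̃₂ has rank n₁ + n₂ − 2(d+1), which is the maximal possible rank n − (d+1) for a stress matrix of the combined d-dimensional configuration on n = n₁ + n₂ − (d+1) vertices. -/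
lemma sum_ite_subtype {V : Type*} [Fintype V] (S : Set V) [DecidablePred (· ∈ S)]
    [Fintype ↥S] (f : V → ℝ) :
    ∑ v : V, (if v ∈ S then f v else 0) = ∑ v : ↥S, f ↑v := by
  rw [← Finset.sum_subtype S.toFinset (fun x => Set.mem_toFinset) f]
  rw [← Finset.sum_subset (Finset.subset_univ S.toFinset)]
  · exact Finset.sum_congr rfl (fun v hv => if_pos (by simpa using hv))
  · intro v _ hv
    exact if_neg (by simpa using hv)

lemma sum_subtype_eq_sum_univ {V : Type*} [Fintype V] (S : Set V) [DecidablePred (· ∈ S)]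
    [Fintype ↥S] (f : V → ℝ) (hf : ∀ u, u ∉ S → f u = 0) : ∑ v : ↥S, f ↑v = ∑ v : V, f v := by
  rw [← sum_ite_subtype]
  refine Finset.sum_congr rfl (fun v _ => ?_)
  by_cases h : v ∈ S <;> simp [h, hf]

lemma extendMatrix_mulVec {V : Type*} [Fintype V] (V₁ : Set V) [DecidablePred (· ∈ V₁)]
    (Ω : Matrix ↥V₁ ↥V₁ ℝ) (x : V → ℝ) (u : V) :
    (extendMatrix V₁ Ω).mulVec x u =
      if h : u ∈ V₁ then Ω.mulVec (fun v : ↥V₁ => x ↑v) ⟨u, h⟩ else 0 := by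
  simp only [Matrix.mulVec, dotProduct, extendMatrix]
  split_ifs with h
  · have step1 : ∀ v : V, (if h' : u ∈ V₁ ∧ v ∈ V₁ then Ω ⟨u, h'.1⟩ ⟨v, h'.2⟩ else 0) * x v
        = if v ∈ V₁ then (fun w : V => (if hv : w ∈ V₁ then Ω ⟨u, h⟩ ⟨w, hv⟩ * x w else 0)) v
          else 0 := by
      intro v
      by_cases hv : v ∈ V₁ <;> simp [hv, h]
    rw [Finset.sum_congr rfl (fun v _ => step1 v), sum_ite_subtype]
    refine Finset.sum_congr rfl (fun v _ => ?_)
    simp [v.2]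
  · refine Finset.sum_eq_zero (fun v _ => ?_)
    exact mul_eq_zero_of_left (dif_neg (fun hh => h hh.1)) _

lemma dot_mulVec_eq_zero {W : Type*} [Fintype W] (Ω : Matrix W W ℝ) (hsym : Ω.IsSymm)
    {z : W → ℝ} (hz : Ω.mulVec z = 0) (x : W → ℝ) :
    ∑ u, Ω.mulVec x u * z u = 0 := by
  have h : dotProduct z (Ω.mulVec x) = 0 := by
    rw [Matrix.dotProduct_mulVec, ← Matrix.mulVec_transpose, hsym.eq, hz,
      zero_dotProduct]
  rw [← h, dotProduct_comm]
  rfl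

lemma ker_mulVecLin_eq_span {W : Type*} [Fintype W] [DecidableEq W] {m : ℕ}
    (Ω : Matrix W W ℝ) (q : Fin m → W → ℝ)
    (hli : LinearIndependent ℝ q) (hker : ∀ j, Ω.mulVec (q j) = 0)
    (hrank : Ω.rank = Fintype.card W - m) (hm : m ≤ Fintype.card W) :
    LinearMap.ker Ω.mulVecLin = Submodule.span ℝ (Set.range q) := by
  have hle : Submodule.span ℝ (Set.range q) ≤ LinearMap.ker Ω.mulVecLin := by
    rw [Submodule.span_le]
    rintro _ ⟨j, rfl⟩
    simpa [Matrix.mulVecLin_apply] using hker j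
  refine (Submodule.eq_of_le_of_finrank_le hle ?_).symm
  have h1 : Ω.rank + Module.finrank ℝ (LinearMap.ker Ω.mulVecLin) = Fintype.card W := by
    rw [Matrix.rank, LinearMap.finrank_range_add_finrank_ker,
      Module.finrank_fintype_fun_eq_card]
  rw [finrank_span_eq_card hli, Fintype.card_fin]
  omega

theorem rank_of_combined_extended_stress_matrices
    (d : ℕ) {V : Type*} [Fintype V] [DecidableEq V]
    (V₁ V₂ : Set V) [DecidablePred (· ∈ V₁)] [DecidablePred (· ∈ V₂)]
    (hunion : V₁ ∪ V₂ = Set.univ) (hcard : Nat.card ↥(V₁ ∩ V₂) = d + 1)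
    (p : V → Fin d → ℝ)
    (hindep : AffineIndependent ℝ (fun v : ↥(V₁ ∩ V₂) => p v))
    (Ω₁ : Matrix ↥V₁ ↥V₁ ℝ) (Ω₂ : Matrix ↥V₂ ↥V₂ ℝ)
    (hsym₁ : Ω₁.IsSymm) (hsym₂ : Ω₂.IsSymm)
    (hone₁ : Ω₁.mulVec (fun _ => 1) = 0) (hone₂ : Ω₂.mulVec (fun _ => 1) = 0)
    (hp₁ : ∀ k, Ω₁.mulVec (fun v : ↥V₁ => p v k) = 0)
    (hp₂ : ∀ k, Ω₂.mulVec (fun v : ↥V₂ => p v k) = 0)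
    (hr₁ : Ω₁.rank = Fintype.card ↥V₁ - (d + 1))
    (hr₂ : Ω₂.rank = Fintype.card ↥V₂ - (d + 1)) :
    ∀ t : ℝ, t ≠ 0 → t ≠ 1 →
      (t • extendMatrix V₁ Ω₁ + (1 - t) • extendMatrix V₂ Ω₂).rank =
          Fintype.card ↥V₁ + Fintype.card ↥V₂ - 2 * (d + 1) ∧
        Fintype.card ↥V₁ + Fintype.card ↥V₂ - 2 * (d + 1) =
          Fintype.card V - (d + 1) := by
  intro t ht0 ht1
  classical
  have ht1' : (1 : ℝ) - t ≠ 0 := sub_ne_zero.mpr (Ne.symm ht1)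
  set V₀ : Set V := V₁ ∩ V₂ with hV₀
  set q : V → Fin (d + 1) → ℝ := fun v => Fin.cons 1 (p v) with hq
  have hcard0 : Fintype.card ↥V₀ = d + 1 := by
    rw [← Nat.card_eq_fintype_card]; exact hcard
  have hsub1 : V₀ ⊆ V₁ := Set.inter_subset_left
  have hsub2 : V₀ ⊆ V₂ := Set.inter_subset_right
  have hle1 : d + 1 ≤ Fintype.card ↥V₁ := by
    rw [← hcard0]
    exact Fintype.card_le_of_injective (Set.inclusion hsub1) (Set.inclusion_injective hsub1)
  have hle2 : d + 1 ≤ Fintype.card ↥V₂ := by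
    rw [← hcard0]
    exact Fintype.card_le_of_injective (Set.inclusion hsub2) (Set.inclusion_injective hsub2)
  have hcardV : Fintype.card V + (d + 1) = Fintype.card ↥V₁ + Fintype.card ↥V₂ := by
    have h := Set.ncard_union_add_ncard_inter V₁ V₂ (Set.toFinite _) (Set.toFinite _)
    rw [hunion, Set.ncard_univ] at h
    simp only [← Nat.card_coe_set_eq, Nat.card_eq_fintype_card] at h
    have h2 : Fintype.card ↥(V₁ ∩ V₂) = d + 1 := by
      rw [← Nat.card_eq_fintype_card]; exact hcard
    omega
  -- linear independence / spanning of q on V₀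
  have hQli : LinearIndependent ℝ (fun v : ↥V₀ => q ↑v) := by
    rw [Fintype.linearIndependent_iff]
    intro z hz
    have h0 : ∑ v : ↥V₀, z v = 0 := by
      have := congrFun hz 0
      simpa [hq, Finset.sum_apply] using this
    have hk : ∑ v : ↥V₀, z v • p ↑v = 0 := by
      funext k
      have := congrFun hz k.succ
      simpa [hq, Finset.sum_apply] using this
    exact fun i => hindep.eq_zero_of_sum_eq_zero h0 hk i (Finset.mem_univ i)
  haveI : Nonempty ↥V₀ := Fintype.card_pos_iff.mp (by omega)
  have hQspan : Submodule.span ℝ (Set.range (fun v : ↥V₀ => q ↑v)) = ⊤ :=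
    hQli.span_eq_top_of_card_eq_finrank
      (by rw [hcard0, Module.finrank_fintype_fun_eq_card, Fintype.card_fin])
  have K1 : ∀ c : Fin (d + 1) → ℝ, (∀ v : ↥V₀, ∑ j, c j * q ↑v j = 0) → c = 0 := by
    intro c hc
    set φ : (Fin (d + 1) → ℝ) →ₗ[ℝ] ℝ := ∑ j, c j • LinearMap.proj j with hφ
    have hφ_apply : ∀ y : Fin (d + 1) → ℝ, φ y = ∑ j, c j * y j := by
      intro y
      simp [hφ, LinearMap.sum_apply]
    have hkerφ : Submodule.span ℝ (Set.range (fun v : ↥V₀ => q ↑v)) ≤ LinearMap.ker φ := by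
      rw [Submodule.span_le]
      rintro _ ⟨v, rfl⟩
      simpa [LinearMap.mem_ker, hφ_apply] using hc v
    rw [hQspan] at hkerφ
    funext j
    have hj : φ (Pi.single j 1) = 0 := hkerφ Submodule.mem_top
    rw [hφ_apply] at hj
    simpa [Pi.single_apply, mul_ite, Finset.sum_ite_eq'] using hj
  have K2 : ∀ z : ↥V₀ → ℝ, (∀ j, ∑ v : ↥V₀, z v * q ↑v j = 0) → z = 0 := by
    intro z hz
    funext v
    refine Fintype.linearIndependent_iff.mp hQli z ?_ v
    funext j
    simpa [Finset.sum_apply] using hz j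
  -- kernels of Ω₁ and Ω₂
  set q₁ : Fin (d + 1) → (↥V₁ → ℝ) := fun j v => q ↑v j with hq₁
  set q₂ : Fin (d + 1) → (↥V₂ → ℝ) := fun j v => q ↑v j with hq₂
  have hq₁ker : ∀ j, Ω₁.mulVec (q₁ j) = 0 := by
    intro j
    refine Fin.cases ?_ ?_ j
    · have h : q₁ 0 = fun _ => 1 := by funext v; simp [hq₁, hq]
      rw [h]; exact hone₁
    · intro k
      have h : q₁ k.succ = fun v : ↥V₁ => p ↑v k := by funext v; simp [hq₁, hq]
      rw [h]; exact hp₁ k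
  have hq₂ker : ∀ j, Ω₂.mulVec (q₂ j) = 0 := by
    intro j
    refine Fin.cases ?_ ?_ j
    · have h : q₂ 0 = fun _ => 1 := by funext v; simp [hq₂, hq]
      rw [h]; exact hone₂
    · intro k
      have h : q₂ k.succ = fun v : ↥V₂ => p ↑v k := by funext v; simp [hq₂, hq]
      rw [h]; exact hp₂ k
  have hq₁li : LinearIndependent ℝ q₁ := by
    rw [Fintype.linearIndependent_iff]
    intro c hc
    have hc0 : ∀ v : ↥V₀, ∑ j, c j * q ↑v j = 0 := by
      intro v
      have := congrFun hc ⟨↑v, hsub1 v.2⟩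
      simpa [hq₁, Finset.sum_apply] using this
    exact fun i => by simpa using congrFun (K1 c hc0) i
  have hq₂li : LinearIndependent ℝ q₂ := by
    rw [Fintype.linearIndependent_iff]
    intro c hc
    have hc0 : ∀ v : ↥V₀, ∑ j, c j * q ↑v j = 0 := by
      intro v
      have := congrFun hc ⟨↑v, hsub2 v.2⟩
      simpa [hq₂, Finset.sum_apply] using this
    exact fun i => by simpa using congrFun (K1 c hc0) i
  have hker₁ : LinearMap.ker Ω₁.mulVecLin = Submodule.span ℝ (Set.range q₁) :=
    ker_mulVecLin_eq_span Ω₁ q₁ hq₁li hq₁ker hr₁ hle1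
  have hker₂ : LinearMap.ker Ω₂.mulVecLin = Submodule.span ℝ (Set.range q₂) :=
    ker_mulVecLin_eq_span Ω₂ q₂ hq₂li hq₂ker hr₂ hle2
  -- the combined matrix
  set M : Matrix V V ℝ := t • extendMatrix V₁ Ω₁ + (1 - t) • extendMatrix V₂ Ω₂ with hM
  set w : Fin (d + 1) → (V → ℝ) := fun j v => q v j with hw
  have hMof : ∀ x : V → ℝ, M.mulVec x =
      t • ((extendMatrix V₁ Ω₁).mulVec x) + (1 - t) • ((extendMatrix V₂ Ω₂).mulVec x) := by
    intro x
    rw [hM, Matrix.add_mulVec, Matrix.smul_mulVec, Matrix.smul_mulVec]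
  have hext1 : ∀ y : V → ℝ, Ω₁.mulVec (fun v : ↥V₁ => y ↑v) = 0 →
      (extendMatrix V₁ Ω₁).mulVec y = 0 := by
    intro y hy
    funext u
    rw [extendMatrix_mulVec]
    split_ifs with h
    · rw [hy]; rfl
    · rfl
  have hext2 : ∀ y : V → ℝ, Ω₂.mulVec (fun v : ↥V₂ => y ↑v) = 0 →
      (extendMatrix V₂ Ω₂).mulVec y = 0 := by
    intro y hy
    funext u
    rw [extendMatrix_mulVec]
    split_ifs with h
    · rw [hy]; rfl
    · rfl
  have hMw : ∀ j, M.mulVec (w j) = 0 := by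
    intro j
    rw [hMof, hext1 (w j) (hq₁ker j), hext2 (w j) (hq₂ker j)]
    simp
  have hwli : LinearIndependent ℝ w := by
    rw [Fintype.linearIndependent_iff]
    intro c hc
    have hc0 : ∀ v : ↥V₀, ∑ j, c j * q ↑v j = 0 := by
      intro v
      have := congrFun hc ↑v
      simpa [hw, Finset.sum_apply] using this
    exact fun i => by simpa using congrFun (K1 c hc0) i
  have hkerM : LinearMap.ker M.mulVecLin = Submodule.span ℝ (Set.range w) := by
    apply le_antisymm
    · intro x hx
      rw [LinearMap.mem_ker, Matrix.mulVecLin_apply, hMof] at hx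
      set y₁ : V → ℝ := (extendMatrix V₁ Ω₁).mulVec x with hy₁
      set y₂ : V → ℝ := (extendMatrix V₂ Ω₂).mulVec x with hy₂
      have hsupp1 : ∀ u, u ∉ V₁ → y₁ u = 0 := fun u hu => by
        rw [hy₁, extendMatrix_mulVec, dif_neg hu]
      have hsupp2 : ∀ u, u ∉ V₂ → y₂ u = 0 := fun u hu => by
        rw [hy₂, extendMatrix_mulVec, dif_neg hu]
      have hy₁0 : ∀ u, u ∉ V₀ → y₁ u = 0 := by
        intro u hu
        by_cases h1 : u ∈ V₁
        · have h2 : u ∉ V₂ := fun h2 => hu ⟨h1, h2⟩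
          have h := congrFun hx u
          simp only [Pi.add_apply, Pi.smul_apply, Pi.zero_apply, smul_eq_mul,
            hsupp2 u h2, mul_zero, add_zero] at h
          exact (mul_eq_zero.mp h).resolve_left ht0
        · exact hsupp1 u h1
      have hrest : ∀ v : ↥V₁, y₁ ↑v = Ω₁.mulVec (fun v : ↥V₁ => x ↑v) v := by
        intro v
        rw [hy₁, extendMatrix_mulVec, dif_pos v.2]
      have horth : ∀ j, ∑ v : ↥V₀, y₁ ↑v * q ↑v j = 0 := by
        intro j
        have hA : ∑ v : ↥V₁, y₁ ↑v * q ↑v j = 0 := by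
          have hd := dot_mulVec_eq_zero Ω₁ hsym₁ (hq₁ker j) (fun v : ↥V₁ => x ↑v)
          calc ∑ v : ↥V₁, y₁ ↑v * q ↑v j
              = ∑ v : ↥V₁, Ω₁.mulVec (fun v : ↥V₁ => x ↑v) v * q₁ j v :=
                Finset.sum_congr rfl (fun v _ => by rw [hrest v])
            _ = 0 := hd
        have h1 : ∑ v : ↥V₁, (fun u => y₁ u * q u j) ↑v = ∑ v : V, y₁ v * q v j :=
          sum_subtype_eq_sum_univ V₁ (fun u => y₁ u * q u j) (fun u hu => by simp [hsupp1 u hu])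
        have h0 : ∑ v : ↥V₀, (fun u => y₁ u * q u j) ↑v = ∑ v : V, y₁ v * q v j :=
          sum_subtype_eq_sum_univ V₀ (fun u => y₁ u * q u j) (fun u hu => by simp [hy₁0 u hu])
        rw [show (∑ v : ↥V₀, y₁ ↑v * q ↑v j) = ∑ v : ↥V₀, (fun u => y₁ u * q u j) ↑v from rfl,
          h0, ← h1]
        exact hA
      have hy₁zero : y₁ = 0 := by
        funext u
        by_cases hu : u ∈ V₀
        · exact congrFun (K2 (fun v : ↥V₀ => y₁ ↑v) horth) ⟨u, hu⟩
        · exact hy₁0 u hu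
      have hy₂zero : y₂ = 0 := by
        funext u
        have h := congrFun hx u
        simp only [Pi.add_apply, Pi.smul_apply, Pi.zero_apply, smul_eq_mul,
          hy₁zero, mul_zero, zero_add] at h
        exact (mul_eq_zero.mp h).resolve_left ht1'
      have hx₁ : Ω₁.mulVec (fun v : ↥V₁ => x ↑v) = 0 := by
        funext v
        rw [← hrest v, hy₁zero]; rfl
      have hx₂ : Ω₂.mulVec (fun v : ↥V₂ => x ↑v) = 0 := by
        funext v
        have : y₂ ↑v = Ω₂.mulVec (fun v : ↥V₂ => x ↑v) v := by
          rw [hy₂, extendMatrix_mulVec, dif_pos v.2]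
        rw [← this, hy₂zero]; rfl
      have hmem₁ : (fun v : ↥V₁ => x ↑v) ∈ LinearMap.ker Ω₁.mulVecLin := by
        rw [LinearMap.mem_ker, Matrix.mulVecLin_apply]; exact hx₁
      have hmem₂ : (fun v : ↥V₂ => x ↑v) ∈ LinearMap.ker Ω₂.mulVecLin := by
        rw [LinearMap.mem_ker, Matrix.mulVecLin_apply]; exact hx₂
      rw [hker₁, Submodule.mem_span_range_iff_exists_fun] at hmem₁
      rw [hker₂, Submodule.mem_span_range_iff_exists_fun] at hmem₂
      obtain ⟨c, hc⟩ := hmem₁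
      obtain ⟨c', hc'⟩ := hmem₂
      have hcc' : c = c' := by
        have hdiff : ∀ v : ↥V₀, ∑ j, (c j - c' j) * q ↑v j = 0 := by
          intro v
          have e1 := congrFun hc ⟨↑v, hsub1 v.2⟩
          have e2 := congrFun hc' ⟨↑v, hsub2 v.2⟩
          simp only [hq₁, hq₂, Finset.sum_apply, Pi.smul_apply, smul_eq_mul] at e1 e2
          have : (∑ j, c j * q ↑v j) = ∑ j, c' j * q ↑v j := by rw [e1, e2]
          simpa [sub_mul, Finset.sum_sub_distrib, sub_eq_zero] using this
        have := K1 _ hdiff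
        funext j
        have hj := congrFun this j
        simpa [sub_eq_zero] using hj
      rw [Submodule.mem_span_range_iff_exists_fun]
      refine ⟨c, ?_⟩
      funext u
      have hu : u ∈ V₁ ∨ u ∈ V₂ := by
        have : u ∈ V₁ ∪ V₂ := by rw [hunion]; trivial
        exact this
      rcases hu with h | h
      · have := congrFun hc ⟨u, h⟩
        simpa [hq₁, hw, Finset.sum_apply] using this
      · have := congrFun hc' ⟨u, h⟩
        rw [hcc']
        simpa [hq₂, hw, Finset.sum_apply] using this
    · rw [Submodule.span_le]
      rintro _ ⟨j, rfl⟩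
      rw [SetLike.mem_coe, LinearMap.mem_ker, Matrix.mulVecLin_apply]
      exact hMw j
  have hfr : M.rank + (d + 1) = Fintype.card V := by
    have h1 : M.rank + Module.finrank ℝ (LinearMap.ker M.mulVecLin) = Fintype.card V := by
      rw [Matrix.rank, LinearMap.finrank_range_add_finrank_ker,
        Module.finrank_fintype_fun_eq_card]
    rw [hkerM, finrank_span_eq_card hwli, Fintype.card_fin] at h1
    exact h1
  constructor
  · omega
  · omega
end
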